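/- Let k and M be positive integers, and let M = p_1^{e_1} p_2^{e_2} ⋯ p_l^{e_l} be the prime factorization of M into distinct primes p_1, …, p_l. For any integer n ≥ max{e_j : 1 ≤ j ≤ l}, we have Σ_{i=0}^{φ(M)-1} B_{n+i}^{(-k)} ≡ 0 (mod M). -/

import Mathlib

/-- Stirling numbers of the second kind. -/
def stirling2 : ℕ → ℕ → ℕ
  | 0, 0 => 1
  | 0, _ + 1 => 0
  | _ + 1, 0 => 0
  | n + 1, m + 1 => (m + 1) * stirling2 n (m + 1) + stirling2 n m

lemma stirling2_eq_zero : ∀ {n m : ℕ}, n < m → stirling2 n m = 0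
  | 0, m + 1, _ => rfl
  | n + 1, m + 1, h => by
    show (m + 1) * stirling2 n (m + 1) + stirling2 n m = 0
    rw [stirling2_eq_zero (by omega), stirling2_eq_zero (by omega), mul_zero]

lemma choose_key (m j : ℕ) :
    (m + 1) * Nat.choose (m + 1) j
      = m * Nat.choose m j + (j + 1) * Nat.choose m j + j * Nat.choose m (j - 1) := by
  cases j with
  | zero => simp
  | succ j' =>
    have h1 : (m + 1) * Nat.choose m j' = Nat.choose (m + 1) (j' + 1) * (j' + 1) :=
      Nat.add_one_mul_choose_eq m j'
    have h2 : Nat.choose (m + 1) (j' + 1) = Nat.choose m j' + Nat.choose m (j' + 1) :=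
      Nat.choose_succ_succ m j'
    simp only [Nat.succ_sub_one]
    nlinarith [h1, h2]

lemma stirling2_zero_zero : stirling2 0 0 = 1 := rfl
lemma stirling2_zero_succ (m : ℕ) : stirling2 0 (m+1) = 0 := rfl
lemma stirling2_succ_zero (n : ℕ) : stirling2 (n+1) 0 = 0 := rfl
lemma stirling2_succ_succ (n m : ℕ) :
    stirling2 (n+1) (m+1) = (m + 1) * stirling2 n (m + 1) + stirling2 n m := rfl

/-- The poly-Bernoulli number `B_n^{(-k)}` with negative upper index `-k`. -/
def polyBernoulliB (k n : ℕ) : ℤ :=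
  (-1 : ℤ) ^ n * ∑ m ∈ Finset.range (n + 1),
    (-1 : ℤ) ^ m * (m.factorial : ℤ) * (stirling2 n m : ℤ) * ((m : ℤ) + 1) ^ k

/-- The poly-Bernoulli number of type C, `C_n^{(-k)}`, with negative upper index `-k`. -/
def polyBernoulliC (k n : ℕ) : ℤ :=
  (-1 : ℤ) ^ n * ∑ m ∈ Finset.range (n + 1),
    (-1 : ℤ) ^ m * (m.factorial : ℤ) * (stirling2 (n + 1) (m + 1) : ℤ) * ((m : ℤ) + 1) ^ k
lemma shift_sum (N : ℕ) (F : ℕ → ℤ) (h0 : F 0 = 0) (hN : F (N+1) = 0) :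
    ∑ m ∈ Finset.range (N+1), F (m+1) = ∑ m ∈ Finset.range (N+1), F m := by
  have e1 := Finset.sum_range_succ' F (N+1)
  rw [Finset.sum_range_succ F (N+1), h0, hN, add_zero, add_zero] at e1
  exact e1.symm

lemma W_identity : ∀ (n : ℕ) (j : ℕ),
    ∑ m ∈ Finset.range (n+1),
        (-1:ℤ)^m * m.factorial * (m.choose j) * stirling2 n m
      = (-1:ℤ)^n * j.factorial * stirling2 (n+1) (j+1) := by
  intro n
  induction n with
  | zero =>
    intro j
    cases j with
    | zero => simp [stirling2_zero_zero, stirling2_succ_succ, stirling2_zero_succ]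
    | succ j' => simp [stirling2_succ_succ, stirling2_zero_succ]
  | succ n ih =>
    intro j
    have hg : ∑ m ∈ Finset.range (n+1),
        (-1:ℤ)^(m+1) * ((m+1).factorial : ℤ) * (((m+1 : ℕ) : ℤ) * (((m+1).choose j : ℕ) : ℤ))
          * (stirling2 n (m+1) : ℤ)
        = ∑ m ∈ Finset.range (n+1),
        (-1:ℤ)^m * (m.factorial : ℤ) * ((m : ℤ) * ((m.choose j : ℕ) : ℤ)) * (stirling2 n m : ℤ) := by
      exact shift_sum n
        (fun t => (-1:ℤ)^t * (t.factorial : ℤ) * ((t : ℤ) * ((t.choose j : ℕ) : ℤ)) * (stirling2 n t : ℤ))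
        (by norm_num) (by simp [stirling2_eq_zero (show n < n+1 by omega)])
    calc ∑ m ∈ Finset.range (n+2),
            (-1:ℤ)^m * m.factorial * (m.choose j) * stirling2 (n+1) m
        = ∑ m ∈ Finset.range (n+1),
            ((-1:ℤ)^(m+1) * ((m+1).factorial : ℤ) * (((m+1 : ℕ) : ℤ) * (((m+1).choose j : ℕ) : ℤ))
                * (stirling2 n (m+1) : ℤ)
             + (-1:ℤ)^(m+1) * ((m+1).factorial : ℤ) * (((m+1).choose j : ℕ) : ℤ) * (stirling2 n m : ℤ)) := by
          rw [Finset.sum_range_succ'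
            (fun m => (-1:ℤ)^m * m.factorial * (m.choose j) * stirling2 (n+1) m) (n+1)]
          rw [stirling2_succ_zero]
          push_cast
          rw [mul_zero, add_zero]
          apply Finset.sum_congr rfl; intro m _
          rw [stirling2_succ_succ]
          push_cast
          ring
      _ = (∑ m ∈ Finset.range (n+1),
            (-1:ℤ)^m * (m.factorial : ℤ) * ((m : ℤ) * ((m.choose j : ℕ) : ℤ)) * (stirling2 n m : ℤ))
          + ∑ m ∈ Finset.range (n+1),
            (-1:ℤ)^(m+1) * ((m+1).factorial : ℤ) * (((m+1).choose j : ℕ) : ℤ) * (stirling2 n m : ℤ) := by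
          rw [Finset.sum_add_distrib, hg]
      _ = -((j:ℤ)+1) * ∑ m ∈ Finset.range (n+1),
              (-1:ℤ)^m * m.factorial * (m.choose j) * stirling2 n m
          - (j:ℤ) * ∑ m ∈ Finset.range (n+1),
              (-1:ℤ)^m * m.factorial * (m.choose (j-1)) * stirling2 n m := by
          rw [← Finset.sum_add_distrib, Finset.mul_sum, Finset.mul_sum]
          rw [sub_eq_add_neg, ← Finset.sum_neg_distrib, ← Finset.sum_add_distrib]
          apply Finset.sum_congr rfl; intro m _
          have hck : ((m:ℤ) + 1) * (((m + 1).choose j : ℕ) : ℤ)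
              = (m : ℤ) * (m.choose j) + ((j:ℤ) + 1) * (m.choose j) + (j : ℤ) * (m.choose (j-1)) := by
            exact_mod_cast congrArg (Nat.cast : ℕ → ℤ) (choose_key m j)
          have hf : ((m+1).factorial : ℤ) = ((m:ℤ)+1) * m.factorial := by
            rw [Nat.factorial_succ]; push_cast; ring
          rw [hf]
          linear_combination (-(-(1:ℤ))^m * (m.factorial : ℤ) * (stirling2 n m : ℤ)) * hck
      _ = (-1:ℤ)^(n+1) * j.factorial * stirling2 (n+2) (j+1) := by
          rw [ih j, ih (j-1)]
          cases j with
          | zero =>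
            have h2 := stirling2_succ_succ (n+1) 0
            rw [h2, stirling2_succ_zero]
            push_cast
            ring
          | succ j' =>
            have h2 := stirling2_succ_succ (n+1) (j'+1)
            rw [h2]
            simp only [Nat.succ_sub_one, Nat.factorial_succ]
            push_cast
            ring

lemma pow_expand (k m : ℕ) :
    (m + 1) ^ k = ∑ j ∈ Finset.range (k + 1),
      stirling2 (k + 1) (j + 1) * j.factorial * m.choose j := by
  induction k with
  | zero => simp [stirling2_succ_succ, stirling2_zero_zero, stirling2_zero_succ]
  | succ k ih =>
    have key : ∀ j : ℕ, (m + 1) * (j.factorial * m.choose j)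
        = (j + 1).factorial * m.choose (j + 1) + (j + 1) * (j.factorial * m.choose j) := by
      intro j
      have h1 : (m + 1) * Nat.choose m j = Nat.choose (m + 1) (j + 1) * (j + 1) :=
        Nat.add_one_mul_choose_eq m j
      have h2 : Nat.choose (m + 1) (j + 1) = Nat.choose m j + Nat.choose m (j + 1) :=
        Nat.choose_succ_succ m j
      have h3 : (j+1).factorial = (j+1) * j.factorial := rfl
      nlinarith [h1, h2, h3]
    calc (m + 1) ^ (k + 1) = (m+1) * (m+1)^k := by ring
      _ = ∑ j ∈ Finset.range (k + 1),
            stirling2 (k + 1) (j + 1) * ((m+1) * (j.factorial * m.choose j)) := by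
          rw [ih, Finset.mul_sum]; apply Finset.sum_congr rfl; intro j _; ring
      _ = (∑ j ∈ Finset.range (k + 1), stirling2 (k + 1) (j + 1) *
              ((j+1).factorial * m.choose (j+1)))
          + ∑ j ∈ Finset.range (k + 1), stirling2 (k + 1) (j + 1) *
              ((j + 1) * (j.factorial * m.choose j)) := by
          rw [← Finset.sum_add_distrib]; apply Finset.sum_congr rfl; intro j _
          rw [key j, mul_add]
      _ = (∑ j ∈ Finset.range (k + 2), stirling2 (k + 1) j * (j.factorial * m.choose j))
          + ∑ j ∈ Finset.range (k + 2), (j+1) * stirling2 (k + 1) (j + 1) *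
              (j.factorial * m.choose j) := by
          congr 1
          · rw [Finset.sum_range_succ' (fun j => stirling2 (k + 1) j * (j.factorial * m.choose j))]
            simp [stirling2_succ_zero]
          · conv_rhs => rw [Finset.sum_range_succ]
            rw [stirling2_eq_zero (show k+1 < k+1+1 by omega)]
            simp only [mul_zero, zero_mul, add_zero]
            apply Finset.sum_congr rfl; intro j _; ring
      _ = ∑ j ∈ Finset.range (k + 2), stirling2 (k + 2) (j + 1) * j.factorial * m.choose j := by
          rw [← Finset.sum_add_distrib]; apply Finset.sum_congr rfl; intro j _
          have h := stirling2_succ_succ (k+1) j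
          rw [h]; ring

lemma symm_form (k n : ℕ) :
    polyBernoulliB k n = ∑ j ∈ Finset.range (k + 1),
      (j.factorial : ℤ)^2 * stirling2 (n+1) (j+1) * stirling2 (k+1) (j+1) := by
  unfold polyBernoulliB
  have step1 : ∀ m : ℕ, (-1 : ℤ) ^ m * (m.factorial : ℤ) * (stirling2 n m : ℤ) * ((m : ℤ) + 1) ^ k
      = ∑ j ∈ Finset.range (k + 1),
          (stirling2 (k+1) (j+1) : ℤ) * j.factorial *
            ((-1:ℤ)^m * m.factorial * (m.choose j) * stirling2 n m) := by
    intro m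
    have h : ((m : ℤ) + 1) ^ k = ((((m+1)^k : ℕ) : ℤ)) := by push_cast; ring
    rw [h, pow_expand k m]
    push_cast
    rw [Finset.mul_sum]
    apply Finset.sum_congr rfl; intro j _; ring
  calc (-1 : ℤ) ^ n * ∑ m ∈ Finset.range (n + 1),
          (-1 : ℤ) ^ m * (m.factorial : ℤ) * (stirling2 n m : ℤ) * ((m : ℤ) + 1) ^ k
      = (-1 : ℤ) ^ n * ∑ m ∈ Finset.range (n + 1), ∑ j ∈ Finset.range (k + 1),
          (stirling2 (k+1) (j+1) : ℤ) * j.factorial *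
            ((-1:ℤ)^m * m.factorial * (m.choose j) * stirling2 n m) := by
        rw [Finset.sum_congr rfl (fun m _ => step1 m)]
    _ = (-1 : ℤ) ^ n * ∑ j ∈ Finset.range (k + 1),
          (stirling2 (k+1) (j+1) : ℤ) * j.factorial *
            ∑ m ∈ Finset.range (n + 1), ((-1:ℤ)^m * m.factorial * (m.choose j) * stirling2 n m) := by
        rw [Finset.sum_comm]
        congr 1
        apply Finset.sum_congr rfl; intro j _
        rw [Finset.mul_sum]
    _ = ∑ j ∈ Finset.range (k + 1),
          (j.factorial : ℤ)^2 * stirling2 (n+1) (j+1) * stirling2 (k+1) (j+1) := by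
        rw [Finset.mul_sum]
        apply Finset.sum_congr rfl; intro j _
        rw [W_identity n j]
        have h1 : (-1:ℤ)^n * (-1:ℤ)^n = 1 := by
          rw [← pow_add, ← two_mul, pow_mul]; norm_num
        linear_combination ((stirling2 (k+1) (j+1) : ℤ) * (j.factorial:ℤ)^2
          * (stirling2 (n+1) (j+1) : ℤ)) * h1

lemma polyB_symm (k n : ℕ) : polyBernoulliB k n = polyBernoulliB n k := by
  rw [symm_form k n, symm_form n k]
  rw [Finset.sum_subset (Finset.range_subset_range.mpr (show k+1 ≤ n+k+2 by omega))
    (fun j _ hj => by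
      rw [stirling2_eq_zero (show k+1 < j+1 by simp at hj; omega), Nat.cast_zero, mul_zero])]
  rw [Finset.sum_subset (Finset.range_subset_range.mpr (show n+1 ≤ n+k+2 by omega))
    (fun j _ hj => by
      rw [stirling2_eq_zero (show n+1 < j+1 by simp at hj; omega)]
      push_cast; ring)]
  apply Finset.sum_congr rfl; intro j _; ring

lemma geom_split (b p N : ℕ) :
    ∑ i ∈ Finset.range (p * N), b ^ i
      = (∑ u ∈ Finset.range N, (b ^ p) ^ u) * (∑ r ∈ Finset.range p, b ^ r) := by
  induction N with
  | zero => simp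
  | succ N ih =>
    rw [Nat.mul_succ, Finset.sum_range_add, ih, Finset.sum_range_succ, add_mul]
    congr 1
    rw [Finset.mul_sum]
    apply Finset.sum_congr rfl; intro r _
    rw [← pow_mul, ← pow_add]

lemma sumpow_mod (p b : ℕ) (hb : b ≡ 1 [MOD p]) (t : ℕ) :
    ∑ r ∈ Finset.range t, b ^ r ≡ t [MOD p] := by
  induction t with
  | zero => rfl
  | succ t ih =>
    rw [Finset.sum_range_succ]
    have : b ^ t ≡ 1 [MOD p] := by simpa using hb.pow t
    simpa using ih.add this

lemma N1 (p : ℕ) : ∀ (j : ℕ) (b N : ℕ), b ≡ 1 [MOD p] → p ^ j ∣ N →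
    p ^ j ∣ ∑ i ∈ Finset.range N, b ^ i := by
  intro j
  induction j with
  | zero => intro b N _ _; simpa using one_dvd _
  | succ j ih =>
    intro b N hb hd
    obtain ⟨c, hc⟩ := hd
    have hN : N = p * (p ^ j * c) := by rw [hc]; ring
    rw [hN, geom_split]
    have h1 : p ^ j ∣ ∑ u ∈ Finset.range (p ^ j * c), (b ^ p) ^ u :=
      ih (b ^ p) _ (by simpa using hb.pow p) ⟨c, rfl⟩
    have h2 : p ∣ ∑ r ∈ Finset.range p, b ^ r := by
      have := (sumpow_mod p b hb p).trans (Nat.modEq_zero_iff_dvd.mpr dvd_rfl)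
      exact Nat.modEq_zero_iff_dvd.mp this
    calc p ^ (j + 1) = p ^ j * p := by ring
      _ ∣ _ := mul_dvd_mul h1 h2

lemma keydvd (M p n l : ℕ) (hp : p.Prime) (hM : 0 < M) (hpM : p ∣ M)
    (hnn : M.factorization p ≤ n) (hl : 0 < l) :
    p ^ M.factorization p ∣
      l.factorial * (l + 1) ^ n * ∑ i ∈ Finset.range M.totient, (l + 1) ^ i := by
  obtain ⟨e, he⟩ : ∃ e, M.factorization p = e := ⟨_, rfl⟩
  rw [he] at hnn ⊢
  by_cases hpb : p ∣ l + 1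
  · have h1 : p ^ e ∣ (l + 1) ^ n :=
      dvd_trans (pow_dvd_pow p hnn) (pow_dvd_pow_of_dvd hpb n)
    exact (h1.mul_left _).mul_right _
  · by_cases hpl : p ∣ l
    · cases e with
      | zero => simpa using one_dvd _
      | succ e' =>
        have hphi : p ^ e' ∣ M.totient := by
          have h1 : Nat.totient (p ^ (e' + 1)) ∣ M.totient :=
            Nat.totient_dvd_of_dvd (he ▸ Nat.ordProj_dvd M p)
          have h2 : Nat.totient (p ^ (e' + 1)) = p ^ e' * (p - 1) := by
            rw [Nat.totient_prime_pow hp (Nat.succ_pos e'), Nat.succ_sub_one]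
          exact dvd_trans (h2 ▸ dvd_mul_right _ _) h1
        have hb : l + 1 ≡ 1 [MOD p] := by
          simpa using (Nat.modEq_zero_iff_dvd.mpr hpl).add_right 1
        have h1 : p ^ e' ∣ ∑ i ∈ Finset.range M.totient, (l + 1) ^ i :=
          N1 p e' (l + 1) M.totient hb hphi
        have h2 : p ∣ l.factorial := Nat.dvd_factorial hp.pos (Nat.le_of_dvd hl hpl)
        have h3 : p ^ (e' + 1) ∣ l.factorial * ∑ i ∈ Finset.range M.totient, (l + 1) ^ i := by
          calc p ^ (e' + 1) = p * p ^ e' := by ring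
            _ ∣ _ := mul_dvd_mul h2 h1
        exact dvd_trans h3 ⟨(l + 1) ^ n, by ring⟩
    · -- p coprime to both l and l+1 : p^e divides the geometric sum
      have hcop : Nat.Coprime (l + 1) (p ^ e) :=
        ((hp.coprime_iff_not_dvd.mpr hpb).symm).pow_right e
      have euler : (l + 1) ^ Nat.totient (p ^ e) ≡ 1 [MOD p ^ e] :=
        Nat.ModEq.pow_totient hcop
      obtain ⟨t, ht⟩ : Nat.totient (p ^ e) ∣ M.totient :=
        Nat.totient_dvd_of_dvd (he ▸ Nat.ordProj_dvd M p)
      have h3 : (l + 1) ^ M.totient ≡ 1 [MOD p ^ e] := by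
        rw [ht, pow_mul]
        simpa using euler.pow t
      have h4 : ((p ^ e : ℕ) : ℤ) ∣ ((l + 1 : ℤ) ^ M.totient - 1) := by
        have h' := (Nat.modEq_iff_dvd.mp h3)
        push_cast at h' ⊢
        exact dvd_sub_comm.mp h' 
      have hgeom : ((∑ i ∈ Finset.range M.totient, (l + 1) ^ i : ℕ) : ℤ) * (l : ℤ)
          = (l + 1 : ℤ) ^ M.totient - 1 := by
        have := geom_sum_mul ((l : ℤ) + 1) M.totient
        push_cast
        linarith [this]
      have h5 : ((p ^ e : ℕ) : ℤ) ∣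
          ((∑ i ∈ Finset.range M.totient, (l + 1) ^ i : ℕ) : ℤ) * (l : ℤ) := by
        rw [hgeom]; exact h4
      have cop2 : IsCoprime ((p ^ e : ℕ) : ℤ) ((l : ℕ) : ℤ) :=
        Nat.isCoprime_iff_coprime.mpr ((hp.coprime_iff_not_dvd.mpr hpl).pow_left e)
      have h6 : (p ^ e : ℕ) ∣ ∑ i ∈ Finset.range M.totient, (l + 1) ^ i := by
        exact_mod_cast cop2.dvd_of_dvd_mul_right h5
      exact h6.mul_left _


lemma Mdvd (M n l : ℕ) (hM : 0 < M) (hn : ∀ q : ℕ, M.factorization q ≤ n) (hl : 0 < l) :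
    M ∣ l.factorial * (l + 1) ^ n * ∑ i ∈ Finset.range M.totient, (l + 1) ^ i := by
  have hx : l.factorial * (l + 1) ^ n * (∑ i ∈ Finset.range M.totient, (l + 1) ^ i) ≠ 0 := by
    have h1 : 0 < ∑ i ∈ Finset.range M.totient, (l + 1) ^ i :=
      Finset.sum_pos (fun i _ => Nat.pow_pos (Nat.succ_pos l))
        (Finset.nonempty_range_iff.mpr (Nat.totient_pos.mpr hM).ne')
    positivity
  rw [← Nat.factorization_le_iff_dvd hM.ne' hx, Finsupp.le_def]
  intro p
  by_cases hp : p.Prime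
  · by_cases hpM : p ∣ M
    · exact (Nat.Prime.pow_dvd_iff_le_factorization hp hx).mp
        (keydvd M p n l hp hM hpM (hn p) hl)
    · rw [Nat.factorization_eq_zero_of_not_dvd hpM]; exact Nat.zero_le _
  · rw [Nat.factorization_eq_zero_of_not_prime _ hp]; exact Nat.zero_le _

theorem polyBernoulliB_sum_period_lower_general (k M : ℕ) (hk : 0 < k) (hM : 0 < M)
    (n : ℕ) (hn : ∀ q : ℕ, M.factorization q ≤ n) :
    (∑ i ∈ Finset.range M.totient, polyBernoulliB k (n + i))
      ≡ 0 [ZMOD (M : ℤ)] := by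
  rw [Int.modEq_zero_iff_dvd]
  have key : ∀ i : ℕ, polyBernoulliB k (n + i)
      = (-1 : ℤ) ^ k * ∑ l ∈ Finset.range (k + 1),
          (-1 : ℤ) ^ l * (l.factorial : ℤ) * (stirling2 k l : ℤ) * ((l : ℤ) + 1) ^ (n + i) := by
    intro i
    rw [polyB_symm]
    rfl
  have hT : ∑ i ∈ Finset.range M.totient, polyBernoulliB k (n + i)
      = (-1 : ℤ) ^ k * ∑ l ∈ Finset.range (k + 1),
          (-1 : ℤ) ^ l * (l.factorial : ℤ) * (stirling2 k l : ℤ)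
            * ∑ i ∈ Finset.range M.totient, ((l : ℤ) + 1) ^ (n + i) := by
    rw [Finset.sum_congr rfl (fun i _ => key i), ← Finset.mul_sum, Finset.sum_comm]
    congr 1
    apply Finset.sum_congr rfl; intro l _
    rw [Finset.mul_sum]
  rw [hT]
  apply Dvd.dvd.mul_left
  apply Finset.dvd_sum
  intro l _
  rcases Nat.eq_zero_or_pos l with rfl | hlpos
  · obtain ⟨k', rfl⟩ := Nat.exists_eq_succ_of_ne_zero hk.ne'
    rw [stirling2_succ_zero]
    simp
  · obtain ⟨c, hc⟩ := Mdvd M n l hM hn hlpos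
    have hc' : (l.factorial : ℤ) * ((l : ℤ) + 1) ^ n
          * (∑ i ∈ Finset.range M.totient, ((l : ℤ) + 1) ^ i) = (M : ℤ) * c := by
      exact_mod_cast congrArg (Nat.cast : ℕ → ℤ) hc
    have hsum : ∑ i ∈ Finset.range M.totient, ((l : ℤ) + 1) ^ (n + i)
        = ((l : ℤ) + 1) ^ n * ∑ i ∈ Finset.range M.totient, ((l : ℤ) + 1) ^ i := by
      rw [Finset.mul_sum]; exact Finset.sum_congr rfl (fun i _ => pow_add _ n i)
    refine ⟨(-1 : ℤ) ^ l * (stirling2 k l : ℤ) * c, ?_⟩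
    rw [hsum]
    linear_combination ((-1 : ℤ) ^ l * (stirling2 k l : ℤ)) * hc'
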